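/- For each vertex v of a digraph G, the head-restriction map δ^h_{n,v}: A_n(G;R) → A_{n-1}(G;R), defined by selecting the terms of a chain whose (n−1)-st vertex equals v and truncating the last vertex, restricts to a well-defined R-module homomorphism δ^h_{n,v}: Ω_n(G;R) → Ω_{n-1}(G;R). The analogous tail-restriction map δ^t_{n,v} also restricts to a homomorphism Ω_n(G;R) → Ω_{n-1}(G;R). -/

import Mathlib

open Finsupp

/-- `p` is an allowed `d`-path in the digraph `(V, E)`: consecutive vertices are joined by
edges. -/
def IsAllowed (V : Type) (E : V → V → Prop) (d : ℕ) (p : Fin (d+1) → V) : Prop :=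
  ∀ i : Fin d, E (p i.castSucc) (p i.succ)

/-- An allowed path condition for tuples of length `d` (i.e. `(d-1)`-paths). -/
def IsAllowedLow (V : Type) (E : V → V → Prop) (d : ℕ) (q : Fin d → V) : Prop :=
  ∀ j : Fin (d-1), E (q ⟨j.val, by have := j.isLt; omega⟩) (q ⟨j.val+1, by have := j.isLt; omega⟩)

/-- Regularity (no repeated consecutive vertices) for tuples of length `d`. -/
def IsRegularLow (V : Type) (d : ℕ) (q : Fin d → V) : Prop :=
  ∀ j : Fin (d-1), q ⟨j.val, by have := j.isLt; omega⟩ ≠ q ⟨j.val+1, by have := j.isLt; omega⟩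

open Classical in
/-- The path differential `∂^P_d` on the regular path complex: the alternating sum of the
face maps deleting the `i`-th vertex, where a face is declared zero if the resulting path
is irregular. -/
noncomputable def pathBoundary (V : Type) (R : Type) [CommRing R] (d : ℕ) :
    ((Fin (d+1) → V) →₀ R) →ₗ[R] ((Fin d → V) →₀ R) :=
  ∑ i : Fin (d+1), ((-1 : R)^(i : ℕ)) •
    ((Finsupp.lsum R fun p : Fin (d+1) → V =>
      if IsRegularLow V d (p ∘ i.succAbove) then Finsupp.lsingle (p ∘ i.succAbove)
      else (0 : R →ₗ[R] ((Fin d → V) →₀ R))) : ((Fin (d+1) → V) →₀ R) →ₗ[R] ((Fin d → V) →₀ R))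

/-- The path chain module `Ω_d(G;R)`: allowed `d`-chains whose path boundary is again an
allowed chain. -/
noncomputable def Omega (V : Type) (E : V → V → Prop) (R : Type) [CommRing R] (d : ℕ) :
    Submodule R ((Fin (d+1) → V) →₀ R) :=
  Finsupp.supported R R {p | IsAllowed V E d p} ⊓
    Submodule.comap (pathBoundary V R d) (Finsupp.supported R R {q | IsAllowedLow V E d q})

open Classical in
/-- The head-restriction map `δ^h_{d,u}`: keep the terms whose second-to-last vertex is `u`
and delete the last vertex. (For `d = 0` it is the zero map.) -/
noncomputable def headSel (V : Type) (R : Type) [CommRing R] (u : V) (d : ℕ) :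
    ((Fin (d+1) → V) →₀ R) →ₗ[R] ((Fin d → V) →₀ R) :=
  Finsupp.lsum R fun p : Fin (d+1) → V =>
    if 1 ≤ d ∧ p ⟨d-1, by omega⟩ = u then Finsupp.lsingle (fun j : Fin d => p j.castSucc)
    else (0 : R →ₗ[R] ((Fin d → V) →₀ R))

open Classical in
/-- The tail-restriction map `δ^t_{d,u}`: keep the terms whose second vertex is `u`
and delete the first vertex. (For `d = 0` it is the zero map.) -/
noncomputable def tailSel (V : Type) (R : Type) [CommRing R] (u : V) (d : ℕ) :
    ((Fin (d+1) → V) →₀ R) →ₗ[R] ((Fin d → V) →₀ R) :=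
  Finsupp.lsum R fun p : Fin (d+1) → V =>
    if h : 1 ≤ d then
      (if p ⟨1, by omega⟩ = u then Finsupp.lsingle (fun j : Fin d => p j.succ)
       else (0 : R →ₗ[R] ((Fin d → V) →₀ R)))
    else 0


section Helpers
variable {V R : Type} [CommRing R]

lemma succAbove_val {d : ℕ} (i : Fin (d+1)) (k : Fin d) :
    ((i.succAbove k) : ℕ) = if (k:ℕ) < (i:ℕ) then (k:ℕ) else (k:ℕ)+1 := by
  rw [Fin.succAbove]
  split_ifs with h1 h2 h2 <;> simp_all [Fin.lt_def]

lemma comp_succAbove_apply {d : ℕ} (p : Fin (d+1) → V) (i : Fin (d+1)) (k : Fin d) :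
    (p ∘ i.succAbove) k
      = p ⟨if (k:ℕ) < (i:ℕ) then (k:ℕ) else (k:ℕ)+1, by have := k.isLt; split_ifs <;> omega⟩ := by
  show p _ = p _
  congr 1
  ext
  rw [succAbove_val]

open Classical in
/-- A fixed classical "indicator" to avoid `Decidable` instance mismatches. -/
noncomputable def cind (P : Prop) (a : R) : R := if P then a else 0

lemma cind_pos {P : Prop} (h : P) (a : R) : cind P a = a := if_pos h

lemma cind_neg {P : Prop} (h : ¬ P) (a : R) : cind P a = 0 := if_neg h

lemma mul_cind (P : Prop) (b a : R) : b * cind P a = cind P (b * a) := by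
  by_cases h : P
  · rw [cind_pos h, cind_pos h]
  · rw [cind_neg h, cind_neg h, mul_zero]

lemma cind_congr {P Q : Prop} (h : P ↔ Q) (a : R) : cind P a = cind Q a := by
  by_cases hP : P
  · rw [cind_pos hP, cind_pos (h.mp hP)]
  · rw [cind_neg hP, cind_neg (fun hq => hP (h.mpr hq))]

lemma lsum_ite_single_apply {α β : Type} (C : α → Prop) [inst : DecidablePred C] (g : α → β)
    (x : α →₀ R) (q : β) :
    (Finsupp.lsum R fun p => if C p then Finsupp.lsingle (g p) else (0 : R →ₗ[R] (β →₀ R))) x q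
      = ∑ p ∈ x.support, cind (C p ∧ g p = q) (x p) := by
  classical
  rw [Finsupp.lsum_apply, Finsupp.sum, Finsupp.finset_sum_apply]
  refine Finset.sum_congr rfl fun p hp => ?_
  by_cases h : C p
  · rw [if_pos h, Finsupp.lsingle_apply, Finsupp.single_apply]
    by_cases h2 : g p = q
    · rw [if_pos h2, cind_pos ⟨h, h2⟩]
    · rw [if_neg h2, cind_neg (fun hc => h2 hc.2)]
  · rw [if_neg h, cind_neg (fun hc => h hc.1)]
    rfl

lemma sum_support_comp {α β : Type} (C : α → Prop) (g : α → β)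
    (x : α →₀ R) (y : β →₀ R)
    (hy : ∀ q, y q = ∑ p ∈ x.support, cind (C p ∧ g p = q) (x p))
    (D : β → Prop) (F : β → R) :
    (∑ q ∈ y.support, cind (D q) (F q * y q))
      = ∑ p ∈ x.support, cind (C p ∧ D (g p)) (F (g p) * x p) := by
  classical
  have hsub : y.support ⊆ x.support.image g := by
    intro q hq
    rw [Finsupp.mem_support_iff] at hq
    by_contra hq2
    apply hq
    rw [hy]
    refine Finset.sum_eq_zero fun p hp => ?_
    refine cind_neg ?_ _
    rintro ⟨-, rfl⟩
    exact hq2 (Finset.mem_image_of_mem g hp)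
  rw [Finset.sum_subset hsub (fun q _ hq => by
    rw [Finsupp.notMem_support_iff.mp hq, mul_zero]
    by_cases h : D q
    · rw [cind_pos h]
    · rw [cind_neg h])]
  have key : ∀ q ∈ x.support.image g, cind (D q) (F q * y q)
      = ∑ p ∈ x.support, cind ((C p ∧ g p = q) ∧ D q) (F q * x p) := by
    intro q _
    by_cases hD : D q
    · rw [cind_pos hD, hy, Finset.mul_sum]
      refine Finset.sum_congr rfl fun p _ => ?_
      rw [mul_cind]
      exact cind_congr (by tauto) _
    · rw [cind_neg hD]
      exact (Finset.sum_eq_zero fun p _ => cind_neg (fun hc => hD hc.2) _).symm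
  rw [Finset.sum_congr rfl key, Finset.sum_comm]
  refine Finset.sum_congr rfl fun p hp => ?_
  rw [Finset.sum_eq_single (g p)]
  · by_cases h : C p
    · refine cind_congr (by tauto) _
    · rw [cind_neg (by tauto), cind_neg (by tauto)]
  · intro q _ hne
    exact cind_neg (by rintro ⟨⟨-, h⟩, -⟩; exact hne h.symm) _
  · intro h
    exact absurd (Finset.mem_image_of_mem g hp) h

end Helpers

section Apply
variable {V : Type} {E : V → V → Prop} {R : Type} [CommRing R]

lemma pathBoundary_apply (d : ℕ) (x : (Fin (d+1) → V) →₀ R) (q : Fin d → V) :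
    pathBoundary V R d x q = ∑ i : Fin (d+1), ∑ p ∈ x.support,
      cind (IsRegularLow V d (p ∘ i.succAbove) ∧ p ∘ i.succAbove = q) ((-1:R)^(i:ℕ) * x p) := by
  rw [pathBoundary, LinearMap.sum_apply, Finsupp.finset_sum_apply]
  refine Finset.sum_congr rfl fun i _ => ?_
  rw [LinearMap.smul_apply, Finsupp.smul_apply, lsum_ite_single_apply, smul_eq_mul,
    Finset.mul_sum]
  exact Finset.sum_congr rfl fun p _ => mul_cind _ _ _

lemma headSel_apply (u : V) (d : ℕ) (x : (Fin (d+1) → V) →₀ R) (q : Fin d → V) :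
    headSel V R u d x q = ∑ p ∈ x.support,
      cind ((1 ≤ d ∧ p ⟨d-1, by omega⟩ = u) ∧ (fun j : Fin d => p j.castSucc) = q) (x p) := by
  classical
  rw [headSel]
  exact lsum_ite_single_apply (fun p : Fin (d+1) → V => 1 ≤ d ∧ p ⟨d-1, by omega⟩ = u)
    (fun p (j : Fin d) => p j.castSucc) x q

lemma tailSel_apply (u : V) (n : ℕ) (x : (Fin (n+2) → V) →₀ R) (q : Fin (n+1) → V) :
    tailSel V R u (n+1) x q = ∑ p ∈ x.support,
      cind (p ⟨1, by omega⟩ = u ∧ (fun j : Fin (n+1) => p j.succ) = q) (x p) := by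
  classical
  have h : tailSel V R u (n+1) = Finsupp.lsum R fun p : Fin (n+2) → V =>
      if p ⟨1, by omega⟩ = u then Finsupp.lsingle (fun j : Fin (n+1) => p j.succ)
      else (0 : R →ₗ[R] ((Fin (n+1) → V) →₀ R)) := by
    rw [tailSel]
    congr 1
  rw [h]
  exact lsum_ite_single_apply (fun p : Fin (n+2) → V => p ⟨1, by omega⟩ = u)
    (fun p (j : Fin (n+1)) => p j.succ) x q

lemma allowed_pair {d : ℕ} (q : Fin (d+1) → V) (hq : IsAllowed V E d q)
    (b c : Fin (d+1)) (h : (c:ℕ) = (b:ℕ)+1) : E (q b) (q c) := by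
  have hb : (b:ℕ) < d := by have := c.isLt; omega
  have h0 := hq ⟨(b:ℕ), hb⟩
  have e1 : ((⟨(b:ℕ), hb⟩ : Fin d).castSucc) = b := by ext; simp
  have e2 : ((⟨(b:ℕ), hb⟩ : Fin d).succ) = c := by ext; simp [h]
  rwa [e1, e2] at h0

lemma face_forces {d : ℕ} (q : Fin (d+1) → V) (hq : IsAllowed V E d q)
    (i : Fin (d+1)) (j : ℕ) (hj : j + 1 < d)
    (hne : ¬ E ((q ∘ i.succAbove) ⟨j, by omega⟩) ((q ∘ i.succAbove) ⟨j+1, by omega⟩)) :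
    (i:ℕ) = j + 1 := by
  by_contra hcon
  refine hne (allowed_pair q hq _ _ ?_)
  rw [succAbove_val, succAbove_val]
  simp only [Fin.val_mk]
  split_ifs <;> omega

lemma IsAllowed.prefixAllowed {d : ℕ} {p : Fin (d+2) → V} (h : IsAllowed V E (d+1) p) :
    IsAllowed V E d (fun j : Fin (d+1) => p j.castSucc) := by
  intro k
  have h0 := h ⟨(k:ℕ), by omega⟩
  have e1 : ((⟨(k:ℕ), by omega⟩ : Fin (d+1)).castSucc) = k.castSucc.castSucc := by ext; simp
  have e2 : ((⟨(k:ℕ), by omega⟩ : Fin (d+1)).succ) = k.succ.castSucc := by ext; simp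
  rw [e1, e2] at h0
  exact h0

lemma IsAllowed.suffixAllowed {d : ℕ} {p : Fin (d+2) → V} (h : IsAllowed V E (d+1) p) :
    IsAllowed V E d (fun j : Fin (d+1) => p j.succ) := by
  intro k
  have h0 := h ⟨(k:ℕ)+1, by omega⟩
  have e1 : ((⟨(k:ℕ)+1, by omega⟩ : Fin (d+1)).castSucc) = k.castSucc.succ := by ext; simp
  have e2 : ((⟨(k:ℕ)+1, by omega⟩ : Fin (d+1)).succ) = k.succ.succ := by ext; simp
  rw [e1, e2] at h0
  exact h0

end Apply

section Toolkit
variable {V : Type} {E : V → V → Prop} {R : Type} [CommRing R]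

lemma congr_val {d : ℕ} {q s : Fin d → V} (h : q = s) (a : ℕ) (ha : a < d) :
    q ⟨a, ha⟩ = s ⟨a, ha⟩ := by rw [h]

lemma funext_val {d : ℕ} {q s : Fin d → V}
    (h : ∀ a : ℕ, (ha : a < d) → q ⟨a, ha⟩ = s ⟨a, ha⟩) : q = s := by
  funext k
  have := h (k:ℕ) k.isLt
  simpa using this

lemma apply_mk_eq {d : ℕ} (f : Fin d → V) (a b : ℕ) (ha : a < d) (hb : b < d) (h : a = b) :
    f ⟨a, ha⟩ = f ⟨b, hb⟩ := by subst h; rfl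

lemma comp_succAbove_mk {d : ℕ} (q : Fin (d+1) → V) (i : Fin (d+1)) (a : ℕ) (ha : a < d) :
    (q ∘ i.succAbove) ⟨a, ha⟩
      = q ⟨if a < (i:ℕ) then a else a+1, by split_ifs <;> omega⟩ := by
  rw [comp_succAbove_apply]

lemma head_comp_mk {d : ℕ} (p : Fin (d+2) → V) (i : Fin (d+1)) (a : ℕ) (ha : a < d) :
    ((fun m : Fin (d+1) => p m.castSucc) ∘ i.succAbove) ⟨a, ha⟩
      = p ⟨if a < (i:ℕ) then a else a+1, by split_ifs <;> omega⟩ := by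
  rw [comp_succAbove_mk]
  congr 1

lemma tail_comp_mk {d : ℕ} (p : Fin (d+2) → V) (i : Fin (d+1)) (a : ℕ) (ha : a < d) :
    ((fun m : Fin (d+1) => p m.succ) ∘ i.succAbove) ⟨a, ha⟩
      = p ⟨(if a < (i:ℕ) then a else a+1)+1, by split_ifs <;> omega⟩ := by
  rw [comp_succAbove_mk]
  congr 1

lemma allowed_mk {d : ℕ} {p : Fin (d+1) → V} (h : IsAllowed V E d p)
    (a : ℕ) (ha : a + 1 < d + 1) : E (p ⟨a, by omega⟩) (p ⟨a+1, ha⟩) :=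
  allowed_pair p h ⟨a, by omega⟩ ⟨a+1, ha⟩ rfl

lemma cind_filter {P Q : Prop} [Decidable P] (a : R) :
    (if P then cind Q a else 0) = cind (P ∧ Q) a := by
  by_cases hP : P
  · rw [if_pos hP]
    by_cases hQ : Q
    · rw [cind_pos hQ, cind_pos ⟨hP, hQ⟩]
    · rw [cind_neg hQ, cind_neg (fun h => hQ h.2)]
  · rw [if_neg hP, cind_neg (fun h => hP h.1)]

end Toolkit

section Variants
variable {V : Type} {E : V → V → Prop} {R : Type} [CommRing R]

lemma comp_succAbove_mk_lt {d : ℕ} (q : Fin (d+1) → V) (i : Fin (d+1)) (a : ℕ) (ha : a < d)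
    (h : a < (i:ℕ)) : (q ∘ i.succAbove) ⟨a, ha⟩ = q ⟨a, by omega⟩ := by
  rw [comp_succAbove_mk]
  exact apply_mk_eq q _ _ _ _ (if_pos h)

lemma comp_succAbove_mk_ge {d : ℕ} (q : Fin (d+1) → V) (i : Fin (d+1)) (a : ℕ) (ha : a < d)
    (h : ¬ a < (i:ℕ)) : (q ∘ i.succAbove) ⟨a, ha⟩ = q ⟨a+1, by omega⟩ := by
  rw [comp_succAbove_mk]
  exact apply_mk_eq q _ _ _ _ (if_neg h)

lemma head_comp_mk_lt {d : ℕ} (p : Fin (d+2) → V) (i : Fin (d+1)) (a : ℕ) (ha : a < d)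
    (h : a < (i:ℕ)) :
    ((fun m : Fin (d+1) => p m.castSucc) ∘ i.succAbove) ⟨a, ha⟩ = p ⟨a, by omega⟩ := by
  rw [head_comp_mk]
  exact apply_mk_eq p _ _ _ _ (if_pos h)

lemma head_comp_mk_ge {d : ℕ} (p : Fin (d+2) → V) (i : Fin (d+1)) (a : ℕ) (ha : a < d)
    (h : ¬ a < (i:ℕ)) :
    ((fun m : Fin (d+1) => p m.castSucc) ∘ i.succAbove) ⟨a, ha⟩ = p ⟨a+1, by omega⟩ := by
  rw [head_comp_mk]
  exact apply_mk_eq p _ _ _ _ (if_neg h)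

lemma tail_comp_mk_lt {d : ℕ} (p : Fin (d+2) → V) (i : Fin (d+1)) (a : ℕ) (ha : a < d)
    (h : a < (i:ℕ)) :
    ((fun m : Fin (d+1) => p m.succ) ∘ i.succAbove) ⟨a, ha⟩ = p ⟨a+1, by omega⟩ := by
  rw [tail_comp_mk]
  exact apply_mk_eq p _ _ _ _ (by rw [if_pos h])

lemma tail_comp_mk_ge {d : ℕ} (p : Fin (d+2) → V) (i : Fin (d+1)) (a : ℕ) (ha : a < d)
    (h : ¬ a < (i:ℕ)) :
    ((fun m : Fin (d+1) => p m.succ) ∘ i.succAbove) ⟨a, ha⟩ = p ⟨a+1+1, by omega⟩ := by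
  rw [tail_comp_mk]
  exact apply_mk_eq p _ _ _ _ (by rw [if_neg h])

end Variants

section HeadBoundary
variable {V : Type} {E : V → V → Prop} {R : Type} [CommRing R]

lemma headSel_boundary (hirr : ∀ u v, E u v → u ≠ v) (n : ℕ) (u : V)
    (x : (Fin (n+2) → V) →₀ R)
    (hsupp : ∀ p ∈ x.support, IsAllowed V E (n+1) p)
    (hbd : ∀ s, ¬ IsAllowedLow V E (n+1) s → pathBoundary V R (n+1) x s = 0)
    (r : Fin n → V) (hr : ¬ IsAllowedLow V E n r) :
    pathBoundary V R n (headSel V R u (n+1) x) r = 0 := by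
  classical
  simp only [IsAllowedLow] at hr
  push_neg at hr
  obtain ⟨j, hj⟩ := hr
  have hjn : (j:ℕ) + 1 < n := by have := j.isLt; omega
  rw [pathBoundary_apply]
  have hstep : ∀ i : Fin (n+1),
      (∑ q ∈ (headSel V R u (n+1) x).support,
        cind (IsRegularLow V n (q ∘ i.succAbove) ∧ q ∘ i.succAbove = r)
          ((-1:R)^(i:ℕ) * headSel V R u (n+1) x q))
      = ∑ p ∈ x.support,
        cind ((1 ≤ n+1 ∧ p ⟨n+1-1, by omega⟩ = u) ∧
          (IsRegularLow V n ((fun m : Fin (n+1) => p m.castSucc) ∘ i.succAbove)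
            ∧ (fun m : Fin (n+1) => p m.castSucc) ∘ i.succAbove = r))
          ((-1:R)^(i:ℕ) * x p) :=
    fun i => sum_support_comp _ _ x _ (fun q => headSel_apply u (n+1) x q)
      (fun q => IsRegularLow V n (q ∘ i.succAbove) ∧ q ∘ i.succAbove = r)
      (fun _ => (-1:R)^(i:ℕ))
  rw [Finset.sum_congr rfl fun i _ => hstep i]
  obtain ⟨i₀, hi₀⟩ : ∃ i : Fin (n+1), (i:ℕ) = (j:ℕ)+1 := ⟨⟨(j:ℕ)+1, by omega⟩, rfl⟩
  refine Eq.trans (Fintype.sum_eq_single i₀ ?_) ?_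
  · -- other faces vanish
    intro i hi
    refine Finset.sum_eq_zero fun p hp => cind_neg ?_ _
    rintro ⟨⟨-, -⟩, -, heq⟩
    apply hi
    ext
    rw [hi₀]
    have e1 := congr_val heq (j:ℕ) (by omega)
    have e2 := congr_val heq ((j:ℕ)+1) (by omega)
    exact face_forces _ (hsupp p hp).prefixAllowed i (j:ℕ) hjn
      (fun hE => hj (by rwa [e1, e2] at hE))
  -- only the (j+1)-st face remains
  have hpull : ∀ (P : Prop) (a : R), cind P ((-1:R)^((i₀:ℕ)) * a)
      = (-1:R)^((j:ℕ)+1) * cind P a := fun P a => by rw [← mul_cind, hi₀]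
  simp only [hpull]
  rw [← Finset.mul_sum]
  refine mul_eq_zero_of_right _ ?_
  by_cases hreg : IsRegularLow V n r
  swap
  · refine Finset.sum_eq_zero fun p hp => cind_neg ?_ _
    rintro ⟨-, h1, h2⟩
    rw [h2] at h1
    exact hreg h1
  by_cases hu : r ⟨n-1, by omega⟩ = u
  swap
  · refine Finset.sum_eq_zero fun p hp => cind_neg ?_ _
    rintro ⟨⟨-, hpu⟩, -, heq⟩
    apply hu
    have e := congr_val heq (n-1) (by omega)
    rw [head_comp_mk_ge p i₀ (n-1) (by omega) (by omega)] at e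
    rw [← e, ← hpu]
    exact apply_mk_eq p _ _ _ _ (by omega)
  -- fiberwise over the last vertex
  rw [← Finset.sum_fiberwise_of_maps_to
      (g := fun p : Fin (n+2) → V => p ⟨n+1, by omega⟩)
      (t := x.support.image fun p : Fin (n+2) → V => p ⟨n+1, by omega⟩)
      (fun p hp => Finset.mem_image_of_mem _ hp)]
  refine Finset.sum_eq_zero fun w hwmem => ?_
  by_cases hwu : w = u
  · subst hwu
    refine Finset.sum_eq_zero fun p hp => ?_
    rw [Finset.mem_filter] at hp
    refine cind_neg ?_ _
    rintro ⟨⟨-, hpu⟩, -, -⟩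
    have hE := allowed_mk (E := E) (hsupp p hp.1) n (by omega)
    have h1 : p ⟨n, by omega⟩ = w := by
      rw [← hpu]
      exact apply_mk_eq p _ _ _ _ (by omega)
    rw [h1, hp.2] at hE
    exact hirr w w hE rfl
  · -- compare with the boundary of x at the extended path sw
    set sw : Fin (n+1) → V := fun k => if h : (k:ℕ) < n then r ⟨(k:ℕ), h⟩ else w with hsw
    have hswlt : ∀ (a : ℕ) (ha : a < n) (hb : a < n+1), sw ⟨a, hb⟩ = r ⟨a, ha⟩ := by
      intro a ha hb
      rw [hsw]
      exact dif_pos ha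
    have hswge : ∀ (hb : n < n+1), sw ⟨n, hb⟩ = w := by
      intro hb
      rw [hsw]
      exact dif_neg (by simp)
    have hregs : IsRegularLow V (n+1) sw := by
      intro m
      have hm : (m:ℕ) < n := m.isLt
      by_cases hmn : (m:ℕ)+1 < n
      · rw [hswlt (m:ℕ) (by omega) (by omega), hswlt ((m:ℕ)+1) hmn (by omega)]
        exact hreg ⟨(m:ℕ), by omega⟩
      · rw [hswlt (m:ℕ) (by omega) (by omega)]
        have h2 : sw ⟨(m:ℕ)+1, by omega⟩ = w := by
          rw [apply_mk_eq sw ((m:ℕ)+1) n (by omega) (by omega) (by omega)]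
          exact hswge (by omega)
        rw [h2, apply_mk_eq r (m:ℕ) (n-1) (by omega) (by omega) (by omega), hu]
        exact fun hcon => hwu hcon.symm
    have hswna : ¬ IsAllowedLow V E (n+1) sw := by
      intro hA
      have h2 := hA ⟨(j:ℕ), by omega⟩
      rw [hswlt (j:ℕ) (by omega) (by omega), hswlt ((j:ℕ)+1) (by omega) (by omega)] at h2
      exact hj h2
    have h0 := hbd sw hswna
    rw [pathBoundary_apply] at h0
    obtain ⟨i₁, hi₁⟩ : ∃ i : Fin (n+2), (i:ℕ) = (j:ℕ)+1 := ⟨⟨(j:ℕ)+1, by omega⟩, rfl⟩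
    have hz1 : ∀ i : Fin (n+2), i ≠ i₁ →
        (∑ p ∈ x.support,
          cind (IsRegularLow V (n+1) (p ∘ i.succAbove) ∧ p ∘ i.succAbove = sw)
            ((-1:R)^(i:ℕ) * x p)) = 0 := by
      intro i hi
      refine Finset.sum_eq_zero fun p hp => cind_neg ?_ _
      rintro ⟨-, heq⟩
      apply hi
      ext
      rw [hi₁]
      have e1 := congr_val heq (j:ℕ) (by omega)
      have e2 := congr_val heq ((j:ℕ)+1) (by omega)
      rw [hswlt (j:ℕ) (by omega) (by omega)] at e1
      rw [hswlt ((j:ℕ)+1) (by omega) (by omega)] at e2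
      exact face_forces _ (hsupp p hp) i (j:ℕ) (by omega)
        (fun hE => hj (by rwa [e1, e2] at hE))
    have hs1 : (∑ p ∈ x.support,
        cind (IsRegularLow V (n+1) (p ∘ i₁.succAbove) ∧ p ∘ i₁.succAbove = sw) (x p)) = 0 := by
      have h3 := (Fintype.sum_eq_single i₁ hz1).symm.trans h0
      have hpull1 : ∀ (P : Prop) (a : R), cind P ((-1:R)^((i₁:ℕ)) * a)
          = (-1:R)^((j:ℕ)+1) * cind P a := fun P a => by rw [← mul_cind, hi₁]
      simp only [hpull1] at h3
      rw [← Finset.mul_sum] at h3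
      have h4 := congrArg (fun t => (-1:R)^((j:ℕ)+1) * t) h3
      simp only [mul_zero] at h4
      rwa [← mul_assoc, ← pow_add, Even.neg_one_pow ⟨(j:ℕ)+1, rfl⟩, one_mul] at h4
    rw [Finset.sum_filter]
    refine Eq.trans (Finset.sum_congr rfl fun p hp => ?_) hs1
    rw [cind_filter]
    refine cind_congr ?_ _
    constructor
    · rintro ⟨hw, ⟨-, hpu⟩, -, heq⟩
      have hfun : p ∘ i₁.succAbove = sw := by
        refine funext_val fun a ha => ?_
        by_cases han : a < n
        · rw [hswlt a han (by omega)]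
          have e := congr_val heq a han
          by_cases haj : a < (j:ℕ)+1
          · rw [head_comp_mk_lt p i₀ a han (by omega)] at e
            rw [comp_succAbove_mk_lt p i₁ a ha (by omega)]
            exact e
          · rw [head_comp_mk_ge p i₀ a han (by omega)] at e
            rw [comp_succAbove_mk_ge p i₁ a ha (by omega)]
            exact e
        · rw [comp_succAbove_mk_ge p i₁ a ha (by omega),
            apply_mk_eq sw a n ha (by omega) (by omega), hswge (by omega),
            apply_mk_eq p (a+1) (n+1) (by omega) (by omega) (by omega)]
          exact hw
      exact ⟨by rw [hfun]; exact hregs, hfun⟩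
    · rintro ⟨-, heq⟩
      have hfun0 : (fun m : Fin (n+1) => p m.castSucc) ∘ i₀.succAbove = r := by
        refine funext_val fun a ha => ?_
        have e := congr_val heq a (by omega)
        by_cases haj : a < (j:ℕ)+1
        · rw [comp_succAbove_mk_lt p i₁ a (by omega) (by omega), hswlt a ha (by omega)] at e
          rw [head_comp_mk_lt p i₀ a ha (by omega)]
          exact e
        · rw [comp_succAbove_mk_ge p i₁ a (by omega) (by omega), hswlt a ha (by omega)] at e
          rw [head_comp_mk_ge p i₀ a ha (by omega)]
          exact e
      have hpu : p ⟨n+1-1, by omega⟩ = u := by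
        have e := congr_val heq (n-1) (by omega)
        rw [comp_succAbove_mk_ge p i₁ (n-1) (by omega) (by omega),
          hswlt (n-1) (by omega) (by omega), hu] at e
        rw [← e]
        exact apply_mk_eq p _ _ _ _ (by omega)
      have hwp : p ⟨n+1, by omega⟩ = w := by
        have e := congr_val heq n (by omega)
        rw [comp_succAbove_mk_ge p i₁ n (by omega) (by omega), hswge (by omega)] at e
        exact e
      exact ⟨hwp, ⟨by omega, hpu⟩, by rw [hfun0]; exact hreg, hfun0⟩

end HeadBoundary

section TailBoundary
variable {V : Type} {E : V → V → Prop} {R : Type} [CommRing R]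

lemma tailSel_boundary (hirr : ∀ u v, E u v → u ≠ v) (n : ℕ) (u : V)
    (x : (Fin (n+2) → V) →₀ R)
    (hsupp : ∀ p ∈ x.support, IsAllowed V E (n+1) p)
    (hbd : ∀ s, ¬ IsAllowedLow V E (n+1) s → pathBoundary V R (n+1) x s = 0)
    (r : Fin n → V) (hr : ¬ IsAllowedLow V E n r) :
    pathBoundary V R n (tailSel V R u (n+1) x) r = 0 := by
  classical
  simp only [IsAllowedLow] at hr
  push_neg at hr
  obtain ⟨j, hj⟩ := hr
  have hjn : (j:ℕ) + 1 < n := by have := j.isLt; omega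
  rw [pathBoundary_apply]
  have hstep : ∀ i : Fin (n+1),
      (∑ q ∈ (tailSel V R u (n+1) x).support,
        cind (IsRegularLow V n (q ∘ i.succAbove) ∧ q ∘ i.succAbove = r)
          ((-1:R)^(i:ℕ) * tailSel V R u (n+1) x q))
      = ∑ p ∈ x.support,
        cind ((p ⟨1, by omega⟩ = u) ∧
          (IsRegularLow V n ((fun m : Fin (n+1) => p m.succ) ∘ i.succAbove)
            ∧ (fun m : Fin (n+1) => p m.succ) ∘ i.succAbove = r))
          ((-1:R)^(i:ℕ) * x p) :=
    fun i => sum_support_comp _ _ x _ (fun q => tailSel_apply u n x q)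
      (fun q => IsRegularLow V n (q ∘ i.succAbove) ∧ q ∘ i.succAbove = r)
      (fun _ => (-1:R)^(i:ℕ))
  rw [Finset.sum_congr rfl fun i _ => hstep i]
  obtain ⟨i₀, hi₀⟩ : ∃ i : Fin (n+1), (i:ℕ) = (j:ℕ)+1 := ⟨⟨(j:ℕ)+1, by omega⟩, rfl⟩
  refine Eq.trans (Fintype.sum_eq_single i₀ ?_) ?_
  · intro i hi
    refine Finset.sum_eq_zero fun p hp => cind_neg ?_ _
    rintro ⟨-, -, heq⟩
    apply hi
    ext
    rw [hi₀]
    have e1 := congr_val heq (j:ℕ) (by omega)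
    have e2 := congr_val heq ((j:ℕ)+1) (by omega)
    exact face_forces _ (hsupp p hp).suffixAllowed i (j:ℕ) hjn
      (fun hE => hj (by rwa [e1, e2] at hE))
  have hpull : ∀ (P : Prop) (a : R), cind P ((-1:R)^((i₀:ℕ)) * a)
      = (-1:R)^((j:ℕ)+1) * cind P a := fun P a => by rw [← mul_cind, hi₀]
  simp only [hpull]
  rw [← Finset.mul_sum]
  refine mul_eq_zero_of_right _ ?_
  by_cases hreg : IsRegularLow V n r
  swap
  · refine Finset.sum_eq_zero fun p hp => cind_neg ?_ _
    rintro ⟨-, h1, h2⟩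
    rw [h2] at h1
    exact hreg h1
  by_cases hu : r ⟨0, by omega⟩ = u
  swap
  · refine Finset.sum_eq_zero fun p hp => cind_neg ?_ _
    rintro ⟨hpu, -, heq⟩
    apply hu
    have e := congr_val heq 0 (by omega)
    rw [tail_comp_mk_lt p i₀ 0 (by omega) (by omega)] at e
    rw [← e, ← hpu]
  -- fiberwise over the first vertex
  rw [← Finset.sum_fiberwise_of_maps_to
      (g := fun p : Fin (n+2) → V => p ⟨0, by omega⟩)
      (t := x.support.image fun p : Fin (n+2) → V => p ⟨0, by omega⟩)
      (fun p hp => Finset.mem_image_of_mem _ hp)]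
  refine Finset.sum_eq_zero fun w hwmem => ?_
  by_cases hwu : w = u
  · subst hwu
    refine Finset.sum_eq_zero fun p hp => ?_
    rw [Finset.mem_filter] at hp
    refine cind_neg ?_ _
    rintro ⟨hpu, -, -⟩
    have hplast : p ⟨0, by omega⟩ = w := hp.2
    have hE := allowed_mk (E := E) (hsupp p hp.1) 0 (by omega)
    have h1 : p ⟨0+1, by omega⟩ = w := by rw [← hpu]
    rw [hplast, h1] at hE
    exact hirr w w hE rfl
  · set sw : Fin (n+1) → V := Fin.cons w r with hsw
    have hsw0 : ∀ (hb : 0 < n+1), sw ⟨0, hb⟩ = w := fun hb => by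
      rw [hsw]; exact Fin.cons_zero (α := fun _ => V) w r
    have hswpos : ∀ (a : ℕ) (ha : a < n) (hb : a+1 < n+1), sw ⟨a+1, hb⟩ = r ⟨a, ha⟩ :=
      fun a ha hb => by rw [hsw]; exact Fin.cons_succ (α := fun _ => V) w r ⟨a, ha⟩
    have hregs : IsRegularLow V (n+1) sw := by
      intro m
      have hm : (m:ℕ) < n := m.isLt
      by_cases hm0 : (m:ℕ) = 0
      · rw [apply_mk_eq sw (m:ℕ) 0 (by omega) (by omega) hm0,
          apply_mk_eq sw ((m:ℕ)+1) (0+1) (by omega) (by omega) (by omega),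
          hsw0 (by omega), hswpos 0 (by omega) (by omega), hu]
        exact fun h => hwu h
      · obtain ⟨b, hb⟩ : ∃ b, (m:ℕ) = b+1 := ⟨(m:ℕ)-1, by omega⟩
        rw [apply_mk_eq sw (m:ℕ) (b+1) (by omega) (by omega) hb,
          apply_mk_eq sw ((m:ℕ)+1) (b+1+1) (by omega) (by omega) (by omega),
          hswpos b (by omega) (by omega), hswpos (b+1) (by omega) (by omega)]
        exact hreg ⟨b, by omega⟩
    have hswna : ¬ IsAllowedLow V E (n+1) sw := by
      intro hA
      have h2 := hA ⟨(j:ℕ)+1, by omega⟩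
      rw [hswpos (j:ℕ) (by omega) (by omega), hswpos ((j:ℕ)+1) (by omega) (by omega)] at h2
      exact hj h2
    have h0 := hbd sw hswna
    rw [pathBoundary_apply] at h0
    obtain ⟨i₂, hi₂⟩ : ∃ i : Fin (n+2), (i:ℕ) = (j:ℕ)+2 := ⟨⟨(j:ℕ)+2, by omega⟩, rfl⟩
    have hz1 : ∀ i : Fin (n+2), i ≠ i₂ →
        (∑ p ∈ x.support,
          cind (IsRegularLow V (n+1) (p ∘ i.succAbove) ∧ p ∘ i.succAbove = sw)
            ((-1:R)^(i:ℕ) * x p)) = 0 := by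
      intro i hi
      refine Finset.sum_eq_zero fun p hp => cind_neg ?_ _
      rintro ⟨-, heq⟩
      apply hi
      ext
      rw [hi₂]
      have e1 := congr_val heq ((j:ℕ)+1) (by omega)
      have e2 := congr_val heq ((j:ℕ)+1+1) (by omega)
      rw [hswpos (j:ℕ) (by omega) (by omega)] at e1
      rw [hswpos ((j:ℕ)+1) (by omega) (by omega)] at e2
      exact face_forces _ (hsupp p hp) i ((j:ℕ)+1) (by omega)
        (fun hE => hj (by rwa [e1, e2] at hE))
    have hs1 : (∑ p ∈ x.support,
        cind (IsRegularLow V (n+1) (p ∘ i₂.succAbove) ∧ p ∘ i₂.succAbove = sw) (x p)) = 0 := by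
      have h3 := (Fintype.sum_eq_single i₂ hz1).symm.trans h0
      have hpull1 : ∀ (P : Prop) (a : R), cind P ((-1:R)^((i₂:ℕ)) * a)
          = (-1:R)^((j:ℕ)+2) * cind P a := fun P a => by rw [← mul_cind, hi₂]
      simp only [hpull1] at h3
      rw [← Finset.mul_sum] at h3
      have h4 := congrArg (fun t => (-1:R)^((j:ℕ)+2) * t) h3
      simp only [mul_zero] at h4
      rwa [← mul_assoc, ← pow_add, Even.neg_one_pow ⟨(j:ℕ)+2, rfl⟩, one_mul] at h4
    rw [Finset.sum_filter]
    refine Eq.trans (Finset.sum_congr rfl fun p hp => ?_) hs1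
    rw [cind_filter]
    refine cind_congr ?_ _
    constructor
    · rintro ⟨hw, hpu, -, heq⟩
      have hfun : p ∘ i₂.succAbove = sw := by
        refine funext_val fun a ha => ?_
        by_cases ha0 : a = 0
        · rw [apply_mk_eq (p ∘ i₂.succAbove) a 0 ha (by omega) ha0,
            apply_mk_eq sw a 0 ha (by omega) ha0,
            comp_succAbove_mk_lt p i₂ 0 (by omega) (by omega), hsw0 (by omega)]
          exact hw
        · obtain ⟨b, hb⟩ : ∃ b, a = b+1 := ⟨a-1, by omega⟩
          subst hb
          rw [hswpos b (by omega) (by omega)]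
          have e := congr_val heq b (by omega)
          by_cases hbj : b < (j:ℕ)+1
          · rw [tail_comp_mk_lt p i₀ b (by omega) (by omega)] at e
            rw [comp_succAbove_mk_lt p i₂ (b+1) (by omega) (by omega)]
            exact e
          · rw [tail_comp_mk_ge p i₀ b (by omega) (by omega)] at e
            rw [comp_succAbove_mk_ge p i₂ (b+1) (by omega) (by omega)]
            exact e
      exact ⟨by rw [hfun]; exact hregs, hfun⟩
    · rintro ⟨-, heq⟩
      have hw : p ⟨0, by omega⟩ = w := by
        have e := congr_val heq 0 (by omega)
        rw [comp_succAbove_mk_lt p i₂ 0 (by omega) (by omega), hsw0 (by omega)] at e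
        exact e
      have hpu : p ⟨1, by omega⟩ = u := by
        have e := congr_val heq (0+1) (by omega)
        rw [comp_succAbove_mk_lt p i₂ (0+1) (by omega) (by omega),
          hswpos 0 (by omega) (by omega), hu] at e
        rw [← e]
      have hfun0 : (fun m : Fin (n+1) => p m.succ) ∘ i₀.succAbove = r := by
        refine funext_val fun a ha => ?_
        have e := congr_val heq (a+1) (by omega)
        by_cases haj : a < (j:ℕ)+1
        · rw [comp_succAbove_mk_lt p i₂ (a+1) (by omega) (by omega),
            hswpos a ha (by omega)] at e
          rw [tail_comp_mk_lt p i₀ a ha (by omega)]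
          exact e
        · rw [comp_succAbove_mk_ge p i₂ (a+1) (by omega) (by omega),
            hswpos a ha (by omega)] at e
          rw [tail_comp_mk_ge p i₀ a ha (by omega)]
          exact e
      exact ⟨hw, hpu, by rw [hfun0]; exact hreg, hfun0⟩

end TailBoundary

/-- For every vertex `u`, the head-restriction map `δ^h_{n+1,u}` and the
tail-restriction map `δ^t_{n+1,u}` restrict to well-defined `R`-module homomorphisms
`Ω_{n+1}(G;R) → Ω_n(G;R)`. -/
theorem headSel_tailSel_mem_Omega (V : Type) (E : V → V → Prop)
    (hirr : ∀ u v, E u v → u ≠ v) (R : Type) [CommRing R] (n : ℕ) (u : V)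
    (x : (Fin (n+2) → V) →₀ R) (hx : x ∈ Omega V E R (n+1)) :
    headSel V R u (n+1) x ∈ Omega V E R n ∧ tailSel V R u (n+1) x ∈ Omega V E R n := by
  classical
  simp only [Omega, Submodule.mem_inf, Submodule.mem_comap] at hx ⊢
  obtain ⟨hx1, hx2⟩ := hx
  rw [Finsupp.mem_supported'] at hx1
  rw [Finsupp.mem_supported'] at hx2
  have hsupp : ∀ p ∈ x.support, IsAllowed V E (n+1) p := fun p hp => by
    by_contra h
    exact Finsupp.mem_support_iff.mp hp (hx1 p h)
  have hbd : ∀ s, ¬ IsAllowedLow V E (n+1) s → pathBoundary V R (n+1) x s = 0 :=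
    fun s hs => hx2 s hs
  refine ⟨⟨?_, ?_⟩, ?_, ?_⟩
  · rw [Finsupp.mem_supported']
    intro q hq
    rw [headSel_apply]
    refine Finset.sum_eq_zero fun p hp => cind_neg ?_ _
    rintro ⟨⟨-, -⟩, rfl⟩
    exact hq ((hsupp p hp).prefixAllowed)
  · rw [Finsupp.mem_supported']
    intro s hs
    exact headSel_boundary hirr n u x hsupp hbd s hs
  · rw [Finsupp.mem_supported']
    intro q hq
    rw [tailSel_apply]
    refine Finset.sum_eq_zero fun p hp => cind_neg ?_ _
    rintro ⟨-, rfl⟩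
    exact hq ((hsupp p hp).suffixAllowed)
  · rw [Finsupp.mem_supported']
    intro s hs
    exact tailSel_boundary hirr n u x hsupp hbd s hs
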